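/- Let G be a finite simple graph that is C_3-free, C_5-free and C_6-free, let x be a vertex and Y ⊆ N(x) with |Y| ≥ 2. Then for a set R of vertices, the following are equivalent: (a) R is a minimal redundant set of G with red(R) = {x} and N(x) ∩ R = Y; (b) R = S ∪ Y ∪ {x} where (i) S ⊆ N²(x), (ii) S ∩ N(Y) = ∅, (iii) each y ∈ Y has a private neighbor with respect to Y ∪ {x}, and (iv) S minimally dominates N(x) \ Y. -/

import Mathlib

open Set SimpleGraph

variable {V : Type*}

/-- The closed neighborhood `N[v]` of a vertex. -/
def closedNbr (G : SimpleGraph V) (v : V) : Set V := insert v (G.neighborSet v)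

/-- Private neighbors of `x` with respect to `I`. -/
def privSet (G : SimpleGraph V) (x : V) (I : Set V) : Set V :=
  {y ∈ closedNbr G x | closedNbr G y ∩ I = {x}}

/-- A set is irredundant if every element has a private neighbor. -/
def Irred (G : SimpleGraph V) (I : Set V) : Prop := ∀ x ∈ I, (privSet G x I).Nonempty

/-- A maximal irredundant set. -/
def MaxIrred (G : SimpleGraph V) (I : Set V) : Prop :=
  Irred G I ∧ ∀ J : Set V, Irred G J → I ⊆ J → J = I

def Redundant (G : SimpleGraph V) (R : Set V) : Prop := ¬ Irred G R

def MinRedundant (G : SimpleGraph V) (R : Set V) : Prop :=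
  Redundant G R ∧ ∀ S : Set V, S ⊂ R → ¬ Redundant G S

/-- The set of redundant vertices of a set. -/
def redVerts (G : SimpleGraph V) (R : Set V) : Set V := {x ∈ R | privSet G x R = ∅}

def Dominating (G : SimpleGraph V) (D : Set V) : Prop := ∀ v : V, ∃ d ∈ D, v ∈ closedNbr G d

def MinDominating (G : SimpleGraph V) (D : Set V) : Prop :=
  Dominating G D ∧ ∀ S : Set V, S ⊂ D → ¬ Dominating G S

/-- Vertices at distance at most 2 from `x`. -/
def ball2 (G : SimpleGraph V) (x : V) : Set V :=
  {y | y = x ∨ G.Adj x y ∨ ∃ w, G.Adj x w ∧ G.Adj w y}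

/-- Vertices at distance exactly 2 from `x`. -/
def sphere2 (G : SimpleGraph V) (x : V) : Set V :=
  {y | y ≠ x ∧ ¬ G.Adj x y ∧ ∃ w, G.Adj x w ∧ G.Adj w y}

/-- `G` contains no induced cycle of length `k`. -/
def CFree (G : SimpleGraph V) (k : ℕ) : Prop :=
  IsEmpty (SimpleGraph.cycleGraph k ↪g G)

/-- `S` dominates `B` through open neighborhoods. -/
def DomOver (G : SimpleGraph V) (S B : Set V) : Prop := ∀ b ∈ B, ∃ s ∈ S, G.Adj s b

def MinDomOver (G : SimpleGraph V) (S B : Set V) : Prop :=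
  DomOver G S B ∧ ∀ S' : Set V, S' ⊂ S → ¬ DomOver G S' B

/-- `N(Y)`, the union of open neighborhoods of elements of `Y`. -/
def nbrUnion (G : SimpleGraph V) (Y : Set V) : Set V := ⋃ y ∈ Y, G.neighborSet y

/-- Private edges of `x` with respect to `I` in a hypergraph. -/
def hypPriv (H : Set (Set V)) (x : V) (I : Set V) : Set (Set V) := {E ∈ H | E ∩ I = {x}}

def HypIrred (H : Set (Set V)) (I : Set V) : Prop := ∀ x ∈ I, (hypPriv H x I).Nonempty

def HypMaxIrred (H : Set (Set V)) (I : Set V) : Prop :=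
  HypIrred H I ∧ ∀ J : Set V, HypIrred H J → I ⊆ J → J = I

/-- The trace of a hypergraph on a set `S`. -/
def htrace (H : Set (Set V)) (S : Set V) : Set (Set V) :=
  {F | ∃ E ∈ H, F = E ∩ S ∧ (E ∩ S).Nonempty}

/-- The closed-neighborhood hypergraph of a graph. -/
def nbrHyp (G : SimpleGraph V) : Set (Set V) := Set.range (closedNbr G)

/-- The first `i` vertices in the ordering `v` (zero-based: `v 0, …, v (i-1)`). -/
def firstVerts (v : ℕ → V) (i : ℕ) : Set V := {x | ∃ j < i, v j = x}

/-- The incidence co-bipartite graph of the closed-neighborhood hypergraph of `G`: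
`Sum.inl` is the vertex side `V`, `Sum.inr` is the copy `U`. -/
def cobip (G : SimpleGraph V) : SimpleGraph (V ⊕ V) :=
  SimpleGraph.fromRel (fun a b => match a, b with
    | Sum.inl _, Sum.inl _ => True
    | Sum.inr _, Sum.inr _ => True
    | Sum.inl a, Sum.inr b => a = b ∨ G.Adj a b
    | Sum.inr _, Sum.inl _ => False)

/-!
Write `R = S ∪ Y ∪ {x}` with `S = R \ N[x]`. In a triangle-free graph, `x` has no private
neighbor with respect to such a set exactly when `Y ≠ ∅` and `S` dominates `N(x) \ Y`. Applied
to `R` and to every `R \ {r}`, this turns the minimality of the redundant set into the minimality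
of the domination (for `r ∈ S`) and into `S ∩ N(Y) = ∅` (for `r ∈ Y`, as `Y \ {r} ≠ ∅`).
Conversely, excluding `C₅` as well makes the second sphere around `x` independent and keeps a
private neighbor of `y ∈ Y` with respect to `Y ∪ {x}` private with respect to all of `R`, so `x`
is the only redundant vertex of `R`.
-/

theorem Set.union_union_sdiff_singleton_left {α : Type*} {A B C : Set α} {r : α} (hB : r ∉ B)
    (hC : r ∉ C) : (A ∪ B ∪ C) \ {r} = A \ {r} ∪ B ∪ C := by
  rw [union_sdiff_distrib, union_sdiff_distrib, sdiff_singleton_eq_self hB,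
    sdiff_singleton_eq_self hC]

theorem Set.union_union_sdiff_singleton_mid {α : Type*} {A B C : Set α} {r : α} (hA : r ∉ A)
    (hC : r ∉ C) : (A ∪ B ∪ C) \ {r} = A ∪ B \ {r} ∪ C := by
  rw [union_sdiff_distrib, union_sdiff_distrib, sdiff_singleton_eq_self hA,
    sdiff_singleton_eq_self hC]

section

variable {G : SimpleGraph V}

theorem CFree.cliqueFree_three (h3 : CFree G 3) : G.CliqueFree 3 := by
  by_contra h
  exact h3.false (cycleGraph_three_eq_top ▸ topEmbeddingOfNotCliqueFree h)

theorem SimpleGraph.CliqueFree.not_adj_of_adj_of_adj (h3 : G.CliqueFree 3) {a b c : V}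
    (hab : G.Adj a b) (hbc : G.Adj b c) : ¬ G.Adj a c := fun hac =>
  isIndepSet_neighborSet_of_triangleFree G h3 b hab.symm hbc hac.ne hac

theorem CFree.not_adj_of_induced_path (h5 : CFree G 5) {a b c d e : V}
    (hab : G.Adj a b) (hbc : G.Adj b c) (hcd : G.Adj c d) (hde : G.Adj d e)
    (hac : ¬ G.Adj a c) (had : ¬ G.Adj a d) (hbd : ¬ G.Adj b d) (hbe : ¬ G.Adj b e)
    (hce : ¬ G.Adj c e) : ¬ G.Adj a e := by
  intro hae
  have hac' : a ≠ c := by rintro rfl; exact had hcd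
  have had' : a ≠ d := by rintro rfl; exact hac hcd.symm
  have hbd' : b ≠ d := by rintro rfl; exact hbe hde
  have hbe' : b ≠ e := by rintro rfl; exact hbd hde.symm
  have hce' : c ≠ e := by rintro rfl; exact hac hae
  refine h5.false ⟨⟨![a, b, c, d, e], ?_⟩, ?_⟩
  · intro i j h
    fin_cases i <;> fin_cases j <;> simp_all [eq_comm]
  · intro i j
    change G.Adj (![a, b, c, d, e] i) (![a, b, c, d, e] j) ↔ _
    fin_cases i <;> fin_cases j <;> simp [cycleGraph_adj', *, G.adj_comm] <;> decide

section Irredundance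

variable {x z : V} {I J R T : Set V}

theorem mem_closedNbr : z ∈ closedNbr G x ↔ z = x ∨ G.Adj x z := Iff.rfl

theorem mem_closedNbr_comm : z ∈ closedNbr G x ↔ x ∈ closedNbr G z := by
  simp only [mem_closedNbr, eq_comm, G.adj_comm]

theorem privSet_anti (hz : z ∈ J) (hJI : J ⊆ I) : privSet G z I ⊆ privSet G z J := by
  rintro y ⟨hyz, hy⟩
  refine ⟨hyz, eq_singleton_iff_unique_mem.2 ⟨⟨mem_closedNbr_comm.1 hyz, hz⟩, fun w hw => ?_⟩⟩
  exact hy.subset ⟨hw.1, hJI hw.2⟩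

theorem Irred.anti (hI : Irred G I) (hJI : J ⊆ I) : Irred G J := fun z hz =>
  (hI z (hJI hz)).mono (privSet_anti hz hJI)

theorem minRedundant_iff :
    MinRedundant G R ↔ Redundant G R ∧ ∀ r ∈ R, Irred G (R \ {r}) := by
  refine and_congr_right fun _ => ⟨fun h r hr => not_not.1 (h _ (sdiff_singleton_ssubset.2 hr)),
    fun h T hTR => ?_⟩
  obtain ⟨r, hr, hrT⟩ := exists_of_ssubset hTR
  exact not_not.2 ((h r hr).anti fun t ht => ⟨hTR.subset ht, fun htr => hrT (htr ▸ ht)⟩)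

theorem redVerts_eq_singleton_iff : redVerts G R = {x} ↔
    x ∈ R ∧ privSet G x R = ∅ ∧ ∀ z ∈ R, z ≠ x → (privSet G z R).Nonempty := by
  simp only [eq_singleton_iff_unique_mem, redVerts, mem_ofPred_eq, nonempty_iff_ne_empty]
  exact ⟨fun ⟨hx, h⟩ => ⟨hx.1, hx.2, fun z hz hzx hpz => hzx (h z ⟨hz, hpz⟩)⟩,
    fun ⟨hxR, hx, hR⟩ => ⟨⟨hxR, hx⟩, fun z ⟨hz, hpz⟩ => by_contra fun hzx => hR z hz hzx hpz⟩⟩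

theorem irred_of_subset (hR : ∀ z ∈ R, z ≠ x → (privSet G z R).Nonempty) (hTR : T ⊆ R)
    (hx : x ∈ T → (privSet G x T).Nonempty) : Irred G T := by
  intro z hz
  by_cases hzx : z = x
  · exact hzx ▸ hx (hzx ▸ hz)
  · exact (hR z (hTR hz) hzx).mono (privSet_anti hz hTR)

end Irredundance

section Domination

variable {S S' B : Set V} {s : V}

theorem DomOver.mono (h : DomOver G S B) (hSS' : S ⊆ S') : DomOver G S' B := fun b hb =>
  let ⟨s, hs, hsb⟩ := h b hb
  ⟨s, hSS' hs, hsb⟩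

theorem minDomOver_iff :
    MinDomOver G S B ↔ DomOver G S B ∧ ∀ s ∈ S, ¬ DomOver G (S \ {s}) B := by
  refine and_congr_right fun _ => ⟨fun h s hs => h _ (sdiff_singleton_ssubset.2 hs),
    fun h S' hS' hdom => ?_⟩
  obtain ⟨s, hs, hsS'⟩ := exists_of_ssubset hS'
  exact h s hs (hdom.mono fun t ht => ⟨hS'.subset ht, fun hts => hsS' (hts ▸ ht)⟩)

theorem exists_adj_of_not_domOver_diff (h : DomOver G S B) (h' : ¬ DomOver G (S \ {s}) B) :
    ∃ b ∈ B, G.Adj s b := by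
  by_contra! hs
  refine h' fun b hb => ?_
  obtain ⟨t, ht, htb⟩ := h b hb
  exact ⟨t, ⟨ht, fun hts => hs b hb (hts ▸ htb)⟩, htb⟩

theorem inter_nbrUnion_eq_empty_iff {Y : Set V} :
    S ∩ nbrUnion G Y = ∅ ↔ ∀ s ∈ S, ∀ y ∈ Y, ¬ G.Adj y s := by
  simp [nbrUnion, eq_empty_iff_forall_notMem]

end Domination

section PrivateNeighbors

variable {x : V} {R S Y : Set V}

theorem privSet_eq_empty_iff (hx : x ∈ R) :
    privSet G x R = ∅ ↔ ∀ v ∈ closedNbr G x, ∃ r ∈ closedNbr G v ∩ R, r ≠ x := by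
  simp only [eq_empty_iff_forall_notMem, privSet, mem_ofPred_eq, not_and]
  refine forall_congr' fun v => imp_congr_right fun hv => ?_
  rw [eq_singleton_iff_unique_mem, not_and_or, not_forall]
  have : x ∈ closedNbr G v ∩ R := ⟨mem_closedNbr_comm.1 hv, hx⟩
  simp [this, and_assoc]

theorem privSet_union_eq_empty_iff (h3 : G.CliqueFree 3) (hY : Y ⊆ G.neighborSet x)
    (hS : Disjoint S (closedNbr G x)) :
    privSet G x (S ∪ Y ∪ {x}) = ∅ ↔ Y.Nonempty ∧ DomOver G S (G.neighborSet x \ Y) := by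
  have hSx : ∀ s ∈ S, s ≠ x ∧ ¬ G.Adj x s := fun s hs => by
    simpa [mem_closedNbr, not_or] using disjoint_left.1 hS hs
  rw [privSet_eq_empty_iff (mem_union_right _ (mem_singleton x))]
  constructor
  · intro h
    constructor
    · obtain ⟨r, ⟨hrx, (hr | hr) | hr⟩, hr'⟩ := h x (Or.inl rfl)
      exacts [(disjoint_left.1 hS hr hrx).elim, ⟨r, hr⟩, absurd hr hr']
    · rintro b ⟨hxb, hbY⟩
      obtain ⟨r, ⟨hrb | hbr, (hr | hr) | hr⟩, hr'⟩ := h b (Or.inr hxb)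
      exacts [absurd (hrb ▸ hxb) (hSx r hr).2, absurd (hrb ▸ hr) hbY, absurd hr hr',
        ⟨r, hr, hbr.symm⟩, absurd hxb (h3.not_adj_of_adj_of_adj (hY hr) hbr.symm), absurd hr hr']
  · rintro ⟨⟨y, hy⟩, hdom⟩ v (rfl | hxv)
    · exact ⟨y, ⟨Or.inr (hY hy), Or.inl (Or.inr hy)⟩, (G.ne_of_adj (hY hy)).symm⟩
    by_cases hvY : v ∈ Y
    · exact ⟨v, ⟨Or.inl rfl, Or.inl (Or.inr hvY)⟩, (G.ne_of_adj hxv).symm⟩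
    obtain ⟨s, hs, hsv⟩ := hdom v ⟨hxv, hvY⟩
    exact ⟨s, ⟨Or.inr hsv.symm, Or.inl (Or.inl hs)⟩, (hSx s hs).1⟩

end PrivateNeighbors

section SecondSphere

variable {x y p s s' : V} {S Y : Set V}

theorem disjoint_sphere2_closedNbr : Disjoint (sphere2 G x) (closedNbr G x) :=
  disjoint_left.2 fun _ ⟨hsx, hxs, _⟩ h => h.elim hsx hxs

theorem not_adj_of_mem_sphere2 (h3 : G.CliqueFree 3) (h5 : CFree G 5) (hs : s ∈ sphere2 G x)
    (hs' : s' ∈ sphere2 G x) : ¬ G.Adj s s' := by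
  intro hss'
  obtain ⟨-, hxs, w, hxw, hws⟩ := hs
  obtain ⟨-, hxs', w', hxw', hw's'⟩ := hs'
  exact h5.not_adj_of_induced_path hxw hws hss' hw's'.symm hxs hxs'
    (h3.not_adj_of_adj_of_adj hws hss') (h3.not_adj_of_adj_of_adj hxw.symm hxw')
    (h3.not_adj_of_adj_of_adj hss' hw's'.symm) hxw'

theorem not_adj_of_adj_of_mem_sphere2 (h3 : G.CliqueFree 3) (h5 : CFree G 5)
    (hxy : G.Adj x y) (hyp : G.Adj y p) (hxp : ¬ G.Adj x p) (hs : s ∈ sphere2 G x)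
    (hys : ¬ G.Adj y s) : ¬ G.Adj p s := by
  intro hps
  obtain ⟨-, hxs, w, hxw, hws⟩ := hs
  exact h5.not_adj_of_induced_path hxw hws hps.symm hyp.symm hxs hxp
    (h3.not_adj_of_adj_of_adj hws hps.symm) (h3.not_adj_of_adj_of_adj hxw.symm hxy)
    (fun h => hys h.symm) hxy

theorem mem_privSet_self_of_mem_sphere2 (h3 : G.CliqueFree 3) (h5 : CFree G 5)
    (hS : S ⊆ sphere2 G x) (hSY : ∀ s ∈ S, ∀ y ∈ Y, ¬ G.Adj y s) (hs : s ∈ S) :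
    s ∈ privSet G s (S ∪ Y ∪ {x}) := by
  refine ⟨Or.inl rfl, eq_singleton_iff_unique_mem.2 ⟨⟨Or.inl rfl, Or.inl (Or.inl hs)⟩, ?_⟩⟩
  rintro w ⟨rfl | hsw, (hw | hw) | rfl⟩
  all_goals first
    | rfl
    | exact (not_adj_of_mem_sphere2 h3 h5 (hS hs) (hS hw) hsw).elim
    | exact (hSY s hs w hw hsw.symm).elim
    | exact ((hS hs).2.1 hsw.symm).elim

theorem privSet_union_eq (h3 : G.CliqueFree 3) (h5 : CFree G 5) (hY : Y ⊆ G.neighborSet x)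
    (hS : S ⊆ sphere2 G x) (hSY : ∀ s ∈ S, ∀ y ∈ Y, ¬ G.Adj y s) (hy : y ∈ Y) :
    privSet G y (S ∪ Y ∪ {x}) = privSet G y (Y ∪ {x}) := by
  refine Subset.antisymm (privSet_anti (Or.inl hy) (union_subset_union_left _ subset_union_right))
    ?_
  rintro p ⟨hyp, hp⟩
  have hxp : x ∉ closedNbr G p := fun h =>
    G.ne_of_adj (hY hy) (hp.subset ⟨h, Or.inr rfl⟩)
  have hSp : Disjoint (closedNbr G p) S := by
    refine disjoint_right.2 fun s hs hsp => ?_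
    rcases hyp with rfl | hyp <;> rcases hsp with rfl | hps
    exacts [(hS hs).2.1 (hY hy), hSY s hs _ hy hps, hSY s hs y hy hyp,
      not_adj_of_adj_of_mem_sphere2 h3 h5 (hY hy) hyp (fun h => hxp (Or.inr h.symm)) (hS hs)
        (hSY s hs y hy) hps]
  refine ⟨hyp, ?_⟩
  rw [union_assoc, inter_union_distrib_left, hSp.inter_eq, empty_union, hp]

end SecondSphere

section Characterization

variable {x : V} {R S Y : Set V}

theorem neighborSet_inter_union_eq (hY : Y ⊆ G.neighborSet x) (hS : Disjoint S (closedNbr G x)) :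
    G.neighborSet x ∩ (S ∪ Y ∪ {x}) = Y := by
  refine Subset.antisymm ?_ fun y hy => ⟨hY hy, Or.inl (Or.inr hy)⟩
  rintro v ⟨hxv, (hv | hv) | rfl⟩
  exacts [(disjoint_left.1 hS hv (Or.inr hxv)).elim, hv, (G.irrefl hxv).elim]

theorem eq_sdiff_closedNbr_union (hxR : x ∈ R) (hNR : G.neighborSet x ∩ R = Y) :
    R = R \ closedNbr G x ∪ Y ∪ {x} := by
  refine Subset.antisymm (fun r hr => ?_) (union_subset
    (union_subset sdiff_subset (hNR ▸ inter_subset_right)) (singleton_subset_iff.2 hxR))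
  by_cases hrx : r ∈ closedNbr G x
  · rcases hrx with rfl | hxr
    exacts [Or.inr rfl, Or.inl (Or.inr (hNR ▸ ⟨hxr, hr⟩))]
  · exact Or.inl (Or.inl ⟨hr, hrx⟩)

theorem minRedundant_of_minDomOver (h3 : G.CliqueFree 3) (h5 : CFree G 5)
    (hY : Y ⊆ G.neighborSet x) (hYne : Y.Nonempty) (hS : S ⊆ sphere2 G x)
    (hSY : ∀ s ∈ S, ∀ y ∈ Y, ¬ G.Adj y s) (hpriv : ∀ y ∈ Y, (privSet G y (Y ∪ {x})).Nonempty)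
    (hdom : MinDomOver G S (G.neighborSet x \ Y)) :
    MinRedundant G (S ∪ Y ∪ {x}) ∧ redVerts G (S ∪ Y ∪ {x}) = {x} := by
  have hSx : Disjoint S (closedNbr G x) := disjoint_sphere2_closedNbr.mono_left hS
  have hxpriv : privSet G x (S ∪ Y ∪ {x}) = ∅ :=
    (privSet_union_eq_empty_iff h3 hY hSx).2 ⟨hYne, hdom.1⟩
  have hpR : ∀ z ∈ S ∪ Y ∪ {x}, z ≠ x → (privSet G z (S ∪ Y ∪ {x})).Nonempty := by
    rintro z ((hz | hz) | rfl) hzx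
    exacts [⟨z, mem_privSet_self_of_mem_sphere2 h3 h5 hS hSY hz⟩,
      privSet_union_eq h3 h5 hY hS hSY hz ▸ hpriv z hz, (hzx rfl).elim]
  refine ⟨minRedundant_iff.2 ⟨fun h => ?_, fun r hr => irred_of_subset hpR sdiff_subset
    fun hx => nonempty_iff_ne_empty.2 ?_⟩, redVerts_eq_singleton_iff.2 ⟨Or.inr rfl, hxpriv, hpR⟩⟩
  · exact (h x (Or.inr rfl)).ne_empty hxpriv
  have hrx : r ∉ ({x} : Set V) := fun h => hx.2 (h.symm ▸ rfl)
  rcases hr with (hr | hr) | hr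
  · have hrY : r ∉ Y := fun h => disjoint_left.1 hSx hr (Or.inr (hY h))
    rw [Ne, union_union_sdiff_singleton_left hrY hrx,
      privSet_union_eq_empty_iff h3 hY (hSx.mono_left sdiff_subset)]
    exact fun h => (minDomOver_iff.1 hdom).2 r hr h.2
  · have hrS : r ∉ S := fun h => disjoint_left.1 hSx h (Or.inr (hY hr))
    rw [Ne, union_union_sdiff_singleton_mid hrS hrx,
      privSet_union_eq_empty_iff h3 (sdiff_subset.trans hY) hSx]
    intro h
    obtain ⟨s, hs, hsr⟩ := h.2 r ⟨hY hr, fun h => h.2 rfl⟩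
    exact hSY s hs r hr hsr.symm
  · exact (hrx hr).elim

theorem minDomOver_of_minRedundant (h3 : G.CliqueFree 3) (hY : Y.Nontrivial)
    (hmin : MinRedundant G R) (hred : redVerts G R = {x}) (hNR : G.neighborSet x ∩ R = Y) :
    R = R \ closedNbr G x ∪ Y ∪ {x} ∧ R \ closedNbr G x ⊆ sphere2 G x ∧
      (∀ s ∈ R \ closedNbr G x, ∀ y ∈ Y, ¬ G.Adj y s) ∧
      (∀ y ∈ Y, (privSet G y (Y ∪ {x})).Nonempty) ∧
      MinDomOver G (R \ closedNbr G x) (G.neighborSet x \ Y) := by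
  obtain ⟨hxR, hxpriv, hpR⟩ := redVerts_eq_singleton_iff.1 hred
  have hYx : Y ⊆ G.neighborSet x := hNR ▸ inter_subset_left
  have hYR : Y ⊆ R := hNR ▸ inter_subset_right
  have hR := eq_sdiff_closedNbr_union hxR hNR
  set S := R \ closedNbr G x
  have hSx : Disjoint S (closedNbr G x) := disjoint_sdiff_left
  have hxpriv_diff : ∀ r ∈ R, r ≠ x → privSet G x (R \ {r}) ≠ ∅ := fun r hr hrx =>
    ((minRedundant_iff.1 hmin).2 r hr x ⟨hxR, hrx.symm⟩).ne_empty
  rw [hR, privSet_union_eq_empty_iff h3 hYx hSx] at hxpriv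
  have hS : ∀ s ∈ S, ¬ DomOver G (S \ {s}) (G.neighborSet x \ Y) := by
    intro s hs hdom
    have hsY : s ∉ Y := fun h => hs.2 (Or.inr (hYx h))
    have hsx : s ∉ ({x} : Set V) := fun h => hs.2 (Or.inl h)
    have := hxpriv_diff s hs.1 hsx
    rw [Ne, hR, union_union_sdiff_singleton_left hsY hsx,
      privSet_union_eq_empty_iff h3 hYx (hSx.mono_left sdiff_subset)] at this
    exact this ⟨hxpriv.1, hdom⟩
  have hY' : ∀ y ∈ Y, ¬ DomOver G S (G.neighborSet x \ (Y \ {y})) := by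
    intro y hy hdom
    have hyS : y ∉ S := fun h => h.2 (Or.inr (hYx hy))
    have hyx : y ∉ ({x} : Set V) := fun h => G.ne_of_adj (hYx hy) h.symm
    have := hxpriv_diff y (hYR hy) hyx
    rw [Ne, hR, union_union_sdiff_singleton_mid hyS hyx,
      privSet_union_eq_empty_iff h3 (sdiff_subset.trans hYx) hSx] at this
    obtain ⟨z, hz, hzy⟩ := hY.exists_ne y
    exact this ⟨⟨z, hz, hzy⟩, hdom⟩
  refine ⟨hR, fun s hs => ?_, fun s hs y hy hys => ?_, fun y hy => ?_,
    minDomOver_iff.2 ⟨hxpriv.2, hS⟩⟩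
  · obtain ⟨b, ⟨hxb, -⟩, hsb⟩ := exists_adj_of_not_domOver_diff hxpriv.2 (hS s hs)
    exact ⟨fun h => hs.2 (Or.inl h), fun h => hs.2 (Or.inr h), b, hxb, hsb.symm⟩
  · refine hY' y hy fun b ⟨hxb, hb⟩ => ?_
    by_cases hby : b = y
    · exact ⟨s, hs, hby ▸ hys.symm⟩
    · exact hxpriv.2 b ⟨hxb, fun h => hb ⟨h, hby⟩⟩
  · obtain ⟨p, hp⟩ := hpR y (hYR hy) (G.ne_of_adj (hYx hy)).symm
    exact ⟨p, privSet_anti (mem_union_left _ hy)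
      (union_subset hYR (singleton_subset_iff.2 hxR)) hp⟩

end Characterization

end

theorem stmt17_general (G : SimpleGraph V) (h3 : CFree G 3) (h5 : CFree G 5)
    (x : V) (Y : Set V) (hY : Y ⊆ G.neighborSet x)
    (hcard : 2 ≤ Y.ncard) (R : Set V) :
    (MinRedundant G R ∧ redVerts G R = {x} ∧ G.neighborSet x ∩ R = Y) ↔
    (∃ S : Set V, R = S ∪ Y ∪ {x} ∧
      S ⊆ sphere2 G x ∧
      S ∩ nbrUnion G Y = ∅ ∧
      (∀ y ∈ Y, (privSet G y (Y ∪ {x})).Nonempty) ∧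
      MinDomOver G S (G.neighborSet x \ Y)) := by
  have h3' := h3.cliqueFree_three
  have hYnt : Y.Nontrivial := (one_lt_ncard_iff_nontrivial_and_finite.1 hcard).1
  constructor
  · rintro ⟨hmin, hred, hNR⟩
    obtain ⟨hR, hS, hSY, hpriv, hdom⟩ := minDomOver_of_minRedundant h3' hYnt hmin hred hNR
    exact ⟨_, hR, hS, inter_nbrUnion_eq_empty_iff.2 hSY, hpriv, hdom⟩
  · rintro ⟨S, rfl, hS, hSY, hpriv, hdom⟩
    obtain ⟨hmin, hred⟩ := minRedundant_of_minDomOver h3' h5 hY hYnt.nonempty hS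
      (inter_nbrUnion_eq_empty_iff.1 hSY) hpriv hdom
    exact ⟨hmin, hred, neighborSet_inter_union_eq hY (disjoint_sphere2_closedNbr.mono_left hS)⟩

/-- characterization of minimal redundant sets with a single redundant
vertex `x` and at least two neighbors of `x`, in `(C₃, C₅, C₆)`-free graphs. -/
theorem stmt17 [Fintype V] (G : SimpleGraph V) (h3 : CFree G 3) (h5 : CFree G 5)
    (h6 : CFree G 6) (x : V) (Y : Set V) (hY : Y ⊆ G.neighborSet x)
    (hcard : 2 ≤ Y.ncard) (R : Set V) :
    (MinRedundant G R ∧ redVerts G R = {x} ∧ G.neighborSet x ∩ R = Y) ↔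
    (∃ S : Set V, R = S ∪ Y ∪ {x} ∧
      S ⊆ sphere2 G x ∧
      S ∩ nbrUnion G Y = ∅ ∧
      (∀ y ∈ Y, (privSet G y (Y ∪ {x})).Nonempty) ∧
      MinDomOver G S (G.neighborSet x \ Y)) :=
  stmt17_general G h3 h5 x Y hY hcard R
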